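/- Let A ∈ ℝ^{n×n}, C ∈ ℝ^{q×n}, and t₁ > 0. Then the kernel of the observability Gramian W(t₁) equals the kernel of the observability matrix O of (C, A); equivalently, W(t₁)x = 0 if and only if C·Aᵏ·x = 0 for all k = 0, 1, …, n−1, if and only if C·exp(tA)·x = 0 for all t ∈ [0, t₁]. -/

import Mathlib

/-!
With `N τ = C * exp (τ • A)` the Gramian is `∫ N τᵀ N τ`, so `xᵀ W(t₁) x = ∫₀^{t₁} ‖N τ x‖²`
and `W(t₁) x = 0` exactly when `C exp(tA) x` vanishes on `[0, t₁]`. Differentiating `k` times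
and letting `t → 0` gives `C Aᵏ x = 0` for every `k`; conversely these make every term of the
exponential series vanish. By Cayley–Hamilton, `Aᵏ` lies in the span of `A⁰, …, A^(n-1)`, so
the conditions for `k < n` already give all of them.
-/

open Matrix intervalIntegral

/-- Observability matrix of the pair `(C, A)`: the vertical block stack of
`C, C*A, C*A², …, C*A^(n-1)`, indexed so that entry `((k, i), j)` is `(C * A^k) i j`. -/
noncomputable def obsMat {n q : ℕ} (C : Matrix (Fin q) (Fin n) ℝ)
    (A : Matrix (Fin n) (Fin n) ℝ) : Matrix (Fin n × Fin q) (Fin n) ℝ :=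
  fun ki j => (C * A ^ (ki.1 : ℕ)) ki.2 j

/-- Observability Gramian `W(t₁) = ∫₀^{t₁} exp(Aᵀτ) Cᵀ C exp(Aτ) dτ` (entrywise integral). -/
noncomputable def obsGram {n q : ℕ} (A : Matrix (Fin n) (Fin n) ℝ)
    (C : Matrix (Fin q) (Fin n) ℝ) (t₁ : ℝ) : Matrix (Fin n) (Fin n) ℝ :=
  fun i j => ∫ τ in (0:ℝ)..t₁,
    (NormedSpace.exp (τ • Aᵀ) * Cᵀ * C * NormedSpace.exp (τ • A)) i j

open Set

theorem eqOn_zero_of_intervalIntegral_eq_zero {f : ℝ → ℝ} {a b : ℝ} (hab : a < b)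
    (hf : Continuous f) (hf₀ : ∀ t, 0 ≤ f t) (h : ∫ t in a..b, f t = 0) :
    EqOn f 0 (Icc a b) := by
  have hae : f =ᵐ[MeasureTheory.volume.restrict (Ioc a b)] 0 :=
    (integral_eq_zero_iff_of_le_of_nonneg_ae hab.le (.of_forall hf₀)
      (hf.intervalIntegrable a b)).mp h
  rw [MeasureTheory.Measure.restrict_congr_set MeasureTheory.Ioc_ae_eq_Icc] at hae
  exact MeasureTheory.Measure.eqOn_Icc_of_ae_eq _ hab.ne hae hf.continuousOn continuousOn_const

section Gram

variable {ι κ : Type*} [Fintype ι] [Fintype κ]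

theorem intervalIntegral_dotProduct {f : ℝ → ι → ℝ} (hf : Continuous f) (v : ι → ℝ) (a b : ℝ) :
    (fun i => ∫ τ in a..b, f τ i) ⬝ᵥ v = ∫ τ in a..b, f τ ⬝ᵥ v := by
  simp only [dotProduct, ← integral_mul_const]
  exact (integral_finsetSum fun i _ =>
    (((continuous_apply i).comp hf).mul continuous_const).intervalIntegrable a b).symm

noncomputable def intervalGram (N : ℝ → Matrix κ ι ℝ) (a b : ℝ) : Matrix ι ι ℝ :=
  of fun i j => ∫ τ in a..b, ((N τ)ᵀ * N τ) i j

theorem intervalGram_mulVec {N : ℝ → Matrix κ ι ℝ} (hN : Continuous N) (a b : ℝ)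
    (x : ι → ℝ) : intervalGram N a b *ᵥ x = fun i => ∫ τ in a..b, (((N τ)ᵀ * N τ) *ᵥ x) i := by
  funext i
  exact intervalIntegral_dotProduct ((continuous_apply i).comp
    (hN.matrix_transpose.matrix_mul hN)) x a b

theorem dotProduct_intervalGram_mulVec {N : ℝ → Matrix κ ι ℝ} (hN : Continuous N) (a b : ℝ)
    (x : ι → ℝ) : x ⬝ᵥ intervalGram N a b *ᵥ x = ∫ τ in a..b, N τ *ᵥ x ⬝ᵥ N τ *ᵥ x := by
  have hgram : Continuous fun τ => ((N τ)ᵀ * N τ) *ᵥ x :=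
    (hN.matrix_transpose.matrix_mul hN).matrix_mulVec continuous_const
  rw [dotProduct_comm, intervalGram_mulVec hN, intervalIntegral_dotProduct hgram]
  refine integral_congr fun τ _ => ?_
  rw [← mulVec_mulVec, dotProduct_comm, dotProduct_mulVec, vecMul_transpose]

theorem intervalGram_mulVec_eq_zero_iff {N : ℝ → Matrix κ ι ℝ} (hN : Continuous N) {a b : ℝ}
    (hab : a < b) (x : ι → ℝ) :
    intervalGram N a b *ᵥ x = 0 ↔ ∀ t ∈ Icc a b, N t *ᵥ x = 0 := by
  constructor
  · intro h t ht
    have hint : ∫ τ in a..b, N τ *ᵥ x ⬝ᵥ N τ *ᵥ x = 0 := by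
      rw [← dotProduct_intervalGram_mulVec hN, h, dotProduct_zero]
    have hNx : Continuous fun τ => N τ *ᵥ x := hN.matrix_mulVec continuous_const
    exact dotProduct_self_eq_zero.mp <| eqOn_zero_of_intervalIntegral_eq_zero hab
      (hNx.dotProduct hNx) (fun τ => dotProduct_self_star_nonneg _) hint ht
  · intro h
    rw [intervalGram_mulVec hN]
    funext i
    rw [Pi.zero_apply, ← integral_zero]
    refine integral_congr fun τ hτ => ?_
    rw [uIcc_of_le hab.le] at hτ
    simp only [← mulVec_mulVec, h τ hτ, mulVec_zero, Pi.zero_apply]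

end Gram

section CayleyHamilton

open Polynomial

variable {R ι : Type*} [CommRing R] [Nontrivial R] [Fintype ι] [DecidableEq ι]

theorem Matrix.pow_mem_span_pow_lt_card (A : Matrix ι ι R) (k : ℕ) :
    A ^ k ∈ Submodule.span R ((A ^ ·) '' Iio (Fintype.card ι)) := by
  rcases (Fintype.card ι).eq_zero_or_pos with hι | hι
  · have : IsEmpty ι := Fintype.card_eq_zero_iff.mp hι
    rw [Subsingleton.elim (A ^ k) 0]
    exact zero_mem _
  have hdeg : (X ^ k %ₘ A.charpoly).natDegree < Fintype.card ι := by
    have hcard := A.charpoly_natDegree_eq_dim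
    refine hcard ▸ natDegree_modByMonic_lt _ A.charpoly_monic fun h1 => ?_
    rw [h1, natDegree_one] at hcard
    omega
  rw [A.pow_eq_aeval_mod_charpoly, aeval_eq_sum_range' hdeg]
  exact Submodule.sum_mem _ fun i hi =>
    Submodule.smul_mem _ _ (Submodule.subset_span ⟨i, Finset.mem_range.mp hi, rfl⟩)

end CayleyHamilton

section Exp

-- `exp` only depends on the topology, which this norm does not change; the calculus needs a norm.
attribute [local instance] Matrix.linftyOpNormedRing Matrix.linftyOpNormedAlgebra

open NormedSpace

variable {ι κ : Type*} [Fintype ι] [DecidableEq ι]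

-- Linear in `M`, so it commutes with differentiation and with the exponential series.
noncomputable def outputMap (C : Matrix κ ι ℝ) (x : ι → ℝ) : Matrix ι ι ℝ →L[ℝ] (κ → ℝ) :=
  LinearMap.toContinuousLinearMap
    { toFun M := (C * M) *ᵥ x
      map_add' M N := by rw [Matrix.mul_add, add_mulVec]
      map_smul' c M := by rw [Matrix.mul_smul, smul_mulVec]; rfl }

theorem hasDerivAt_mul_exp_smul_mulVec [Fintype κ] (A : Matrix ι ι ℝ) (C : Matrix κ ι ℝ)
    (x : ι → ℝ) (t : ℝ) :
    HasDerivAt (fun s : ℝ => (C * exp (s • A)) *ᵥ x) ((C * A * exp (t • A)) *ᵥ x) t := by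
  rw [Matrix.mul_assoc]
  exact (outputMap C x).hasFDerivAt.comp_hasDerivAt t (hasDerivAt_exp_smul_const' A t)

theorem mul_pow_mulVec_eq_zero_of_mul_exp_smul_mulVec_eq_zero [Fintype κ] {A : Matrix ι ι ℝ}
    {C : Matrix κ ι ℝ} {x : ι → ℝ} {b : ℝ} (hb : 0 < b)
    (h : ∀ t ∈ Ioo 0 b, (C * exp (t • A)) *ᵥ x = 0) (k : ℕ) : (C * A ^ k) *ᵥ x = 0 := by
  have hIoo : ∀ t ∈ Ioo 0 b, (C * A ^ k * exp (t • A)) *ᵥ x = 0 := by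
    induction k with
    | zero => simpa using h
    | succ k ih =>
      intro t ht
      have hzero : (fun s : ℝ => (C * A ^ k * exp (s • A)) *ᵥ x) =ᶠ[nhds t] fun _ => 0 :=
        Filter.eventually_of_mem (isOpen_Ioo.mem_nhds ht) ih
      rw [pow_succ, ← Matrix.mul_assoc, ← (hasDerivAt_mul_exp_smul_mulVec A (C * A ^ k) x t).deriv,
        hzero.deriv_eq, deriv_const]
  have hcont : Continuous fun s : ℝ => (C * A ^ k * exp (s • A)) *ᵥ x :=
    continuous_iff_continuousAt.2 fun t => (hasDerivAt_mul_exp_smul_mulVec A _ x t).continuousAt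
  have h0 : (0 : ℝ) ∈ closure (Ioo 0 b) := closure_Ioo hb.ne ▸ left_mem_Icc.mpr hb.le
  simpa using EqOn.closure hIoo hcont continuous_const h0

theorem mul_exp_smul_mulVec_eq_zero {A : Matrix ι ι ℝ} {C : Matrix κ ι ℝ} {x : ι → ℝ}
    (h : ∀ k, (C * A ^ k) *ᵥ x = 0) (t : ℝ) : (C * exp (t • A)) *ᵥ x = 0 := by
  have hterms : HasSum (fun k => outputMap C x ((k.factorial⁻¹ : ℝ) • (t • A) ^ k)) 0 := by
    simp [outputMap, smul_pow, h, hasSum_zero]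
  exact ((exp_series_hasSum_exp' (t • A)).mapL (outputMap C x)).unique hterms

theorem mul_exp_smul_mulVec_eq_zero_iff [Fintype κ] {A : Matrix ι ι ℝ} {C : Matrix κ ι ℝ}
    {x : ι → ℝ} {b : ℝ} (hb : 0 < b) :
    (∀ t ∈ Icc 0 b, (C * exp (t • A)) *ᵥ x = 0) ↔
      ∀ k < Fintype.card ι, (C * A ^ k) *ᵥ x = 0 := by
  refine ⟨fun h k _ => mul_pow_mulVec_eq_zero_of_mul_exp_smul_mulVec_eq_zero hb
    (fun t ht => h t (Ioo_subset_Icc_self ht)) k, fun h t _ => mul_exp_smul_mulVec_eq_zero ?_ t⟩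
  have hker : (A ^ ·) '' Iio (Fintype.card ι) ⊆ LinearMap.ker (outputMap C x).toLinearMap := by
    rintro _ ⟨k, hk, rfl⟩
    exact h k hk
  exact fun k => Submodule.span_le.mpr hker (A.pow_mem_span_pow_lt_card k)

theorem obsGram_eq_intervalGram {n q : ℕ} (A : Matrix (Fin n) (Fin n) ℝ)
    (C : Matrix (Fin q) (Fin n) ℝ) (t₁ : ℝ) :
    obsGram A C t₁ = intervalGram (fun τ => C * exp (τ • A)) 0 t₁ := by
  ext i j
  refine integral_congr fun τ _ => ?_
  rw [transpose_mul, ← transpose_smul, Matrix.exp_transpose, Matrix.mul_assoc, Matrix.mul_assoc]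

theorem obsGram_mulVec_eq_zero_iff {n q : ℕ} (A : Matrix (Fin n) (Fin n) ℝ)
    (C : Matrix (Fin q) (Fin n) ℝ) {t₁ : ℝ} (ht₁ : 0 < t₁) (x : Fin n → ℝ) :
    obsGram A C t₁ *ᵥ x = 0 ↔ ∀ t ∈ Icc 0 t₁, (C * exp (t • A)) *ᵥ x = 0 := by
  rw [obsGram_eq_intervalGram]
  exact intervalGram_mulVec_eq_zero_iff
    (continuous_const.matrix_mul (exp_continuous.comp (continuous_id.smul continuous_const))) ht₁ x

end Exp

theorem obsMat_mulVec_eq_zero_iff {n q : ℕ} (C : Matrix (Fin q) (Fin n) ℝ)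
    (A : Matrix (Fin n) (Fin n) ℝ) (x : Fin n → ℝ) :
    obsMat C A *ᵥ x = 0 ↔ ∀ k < n, (C * A ^ k) *ᵥ x = 0 := by
  simp only [funext_iff, Prod.forall, Fin.forall_iff]
  rfl

/-- The kernel of the observability Gramian `W(t₁)` (for `t₁ > 0`) equals the kernel of
the observability matrix `O`; equivalently, `W(t₁)x = 0` iff `C·Aᵏ·x = 0` for all
`k = 0, …, n−1`, iff `C·exp(tA)·x = 0` for all `t ∈ [0, t₁]`. -/
theorem gramian_kernel_eq_obs_kernel {n q : ℕ}
    (A : Matrix (Fin n) (Fin n) ℝ) (C : Matrix (Fin q) (Fin n) ℝ)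
    (t₁ : ℝ) (ht₁ : 0 < t₁) :
    (∀ x : Fin n → ℝ, (obsGram A C t₁).mulVec x = 0 ↔ (obsMat C A).mulVec x = 0) ∧
    (∀ x : Fin n → ℝ, (obsGram A C t₁).mulVec x = 0 ↔
      ∀ k : ℕ, k < n → (C * A ^ k).mulVec x = 0) ∧
    (∀ x : Fin n → ℝ, (obsGram A C t₁).mulVec x = 0 ↔
      ∀ t ∈ Set.Icc (0:ℝ) t₁, C.mulVec ((NormedSpace.exp (t • A)).mulVec x) = 0) := by
  have hpow (x : Fin n → ℝ) :
      obsGram A C t₁ *ᵥ x = 0 ↔ ∀ k < n, (C * A ^ k) *ᵥ x = 0 := by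
    rw [obsGram_mulVec_eq_zero_iff A C ht₁, mul_exp_smul_mulVec_eq_zero_iff ht₁, Fintype.card_fin]
  refine ⟨fun x => (hpow x).trans (obsMat_mulVec_eq_zero_iff C A x).symm, hpow, fun x => ?_⟩
  simp only [obsGram_mulVec_eq_zero_iff A C ht₁, mulVec_mulVec]
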